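/- arXiv:2404.17422 — 2 statements merged into one kernel-verified Lean document; each statement's English description precedes it below -/
import Mathlib

section
/- Let x₀ < x₁ < … < x₅ be reals, x ∈ (x₂, x₃), and suppose all pairwise midpoints of points in {x₀,…,x₅, x} are distinct. Then the order-1 Sibson interpolation of the value at x from the data (xᵢ, yᵢ) equals the piecewise-linear interpolant: G₁(x) = ( y₂(x₃−x) + y₃(x−x₂) )/(x₃−x₂), where the Sibson weights are the lengths of the intersections of the order-1 Voronoi cell of x in {x₀,…,x₅,x} with the order-1 Voronoi cells of x₂ and x₃ in {x₀,…,x₅}, normalized by the length of the cell of x. -/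
/-! The midpoint `(x₂ + x₃) / 2` splits the cell of `x`, of length `(x₃ - x₂) / 2`, into its parts
in the cells of `x₂` and `x₃`, of lengths `(x₃ - x) / 2` and `(x - x₂) / 2`. -/

open MeasureTheory Set

lemma toReal_volume_Ioo_inter_Ioo_of_le {a b c d : ℝ} (hca : c ≤ a) (had : a ≤ d) (hdb : d ≤ b) :
    (volume (Ioo a b ∩ Ioo c d)).toReal = d - a := by
  rw [Ioo_inter_Ioo, max_eq_left hca, min_eq_right hdb, Real.volume_Ioo,
    ENNReal.toReal_ofReal (sub_nonneg.2 had)]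

theorem sibson_order1_is_piecewise_linear_general
    (x1 x2 x3 x4 x : ℝ) (y2 y3 : ℝ)
    (h12 : x1 < x2) (h34 : x3 < x4)
    (hx2 : x2 < x) (hx3 : x < x3) :
    ((volume (Set.Ioo ((x2 + x) / 2) ((x + x3) / 2) ∩
        Set.Ioo ((x1 + x2) / 2) ((x2 + x3) / 2))).toReal /
      (volume (Set.Ioo ((x2 + x) / 2) ((x + x3) / 2))).toReal) * y2 +
    ((volume (Set.Ioo ((x2 + x) / 2) ((x + x3) / 2) ∩
        Set.Ioo ((x2 + x3) / 2) ((x3 + x4) / 2))).toReal /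
      (volume (Set.Ioo ((x2 + x) / 2) ((x + x3) / 2))).toReal) * y3 =
    (y2 * (x3 - x) + y3 * (x - x2)) / (x3 - x2) := by
  have hcell : (volume (Ioo ((x2 + x) / 2) ((x + x3) / 2))).toReal = (x3 - x2) / 2 := by
    rw [Real.volume_Ioo, ENNReal.toReal_ofReal (by linarith)]
    ring
  rw [hcell, toReal_volume_Ioo_inter_Ioo_of_le (by linarith) (by linarith) (by linarith),
    inter_comm, toReal_volume_Ioo_inter_Ioo_of_le (by linarith) (by linarith) (by linarith)]
  field_simp [(by linarith : x3 - x2 ≠ 0)]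
  ring

theorem sibson_order1_is_piecewise_linear
    (x0 x1 x2 x3 x4 x5 x : ℝ) (y0 y1 y2 y3 y4 y5 : ℝ)
    (h01 : x0 < x1) (h12 : x1 < x2) (h23 : x2 < x3) (h34 : x3 < x4) (h45 : x4 < x5)
    (hx2 : x2 < x) (hx3 : x < x3)
    (hmid : ∀ a b c d : Fin 7,
      (![x0, x1, x2, x3, x4, x5, x] a + ![x0, x1, x2, x3, x4, x5, x] b) / 2 =
        (![x0, x1, x2, x3, x4, x5, x] c + ![x0, x1, x2, x3, x4, x5, x] d) / 2 →
      ({a, b} : Finset (Fin 7)) = {c, d}) :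
    ((volume (Set.Ioo ((x2 + x) / 2) ((x + x3) / 2) ∩
        Set.Ioo ((x1 + x2) / 2) ((x2 + x3) / 2))).toReal /
      (volume (Set.Ioo ((x2 + x) / 2) ((x + x3) / 2))).toReal) * y2 +
    ((volume (Set.Ioo ((x2 + x) / 2) ((x + x3) / 2) ∩
        Set.Ioo ((x2 + x3) / 2) ((x3 + x4) / 2))).toReal /
      (volume (Set.Ioo ((x2 + x) / 2) ((x + x3) / 2))).toReal) * y3 =
    (y2 * (x3 - x) + y3 * (x - x2)) / (x3 - x2) :=
  sibson_order1_is_piecewise_linear_general x1 x2 x3 x4 x y2 y3 h12 h34 hx2 hx3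
end

section
/- Let x₁ < … < x_n be real numbers and consider a point t ∈ ((x_i+x_{i+k})/2, (x_{i+1}+x_{i+k+1})/2) with t ≠ (x_{i+1}+x_{i+k})/2. If (x_{i+1}+x_{i+k})/2 < t < (x_{i+1}+x_{i+k+1})/2, then the k nearest points of {x₁,…,x_n} to t are exactly x_{i+1}, x_{i+2}, …, x_{i+k}. -/
theorem k_nearest_points_in_cell (n k i : ℕ) (x : ℕ → ℝ) (t : ℝ)
    (hmono : ∀ j, 1 ≤ j → j + 1 ≤ n → x j < x (j + 1))
    (hk1 : 1 ≤ k) (hkn : k ≤ n - 1) (hi1 : 1 ≤ i) (hi2 : i ≤ n - k - 1)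
    (ht1 : (x (i + 1) + x (i + k)) / 2 < t)
    (ht2 : t < (x (i + 1) + x (i + k + 1)) / 2) :
    ∀ j, i + 1 ≤ j → j ≤ i + k →
      ∀ m, 1 ≤ m → m ≤ n → (m < i + 1 ∨ i + k < m) →
        |t - x j| < |t - x m| := by
  have key : ∀ a b, 1 ≤ a → a < b → b ≤ n → x a < x b := by
    intro a b ha
    induction b with
    | zero => intro h; omega
    | succ b ih =>
      intro hab hbn
      rcases Nat.lt_succ_iff_lt_or_eq.mp hab with h | h
      · exact (ih h (by omega)).trans (hmono b (by omega) hbn)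
      · subst h; exact hmono a ha hbn
  have hle : ∀ a b, 1 ≤ a → a ≤ b → b ≤ n → x a ≤ x b := by
    intro a b ha hab hbn
    rcases hab.lt_or_eq with h | h
    · exact (key a b ha h hbn).le
    · rw [h]
  have hn : i + k + 1 ≤ n := by omega
  intro j hj1 hj2 m hm1 hmn hcase
  have hxj1 : x (i + 1) ≤ x j := hle _ _ (by omega) hj1 (by omega)
  have hxj2 : x j ≤ x (i + k) := hle _ _ (by omega) hj2 (by omega)
  have hkk : x (i + k) < x (i + k + 1) := key _ _ (by omega) (by omega) hn
  rcases hcase with hm | hm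
  · -- m ≤ i
    have hxm : x m ≤ x i := hle m i hm1 (by omega) (by omega)
    have hii : x i < x (i + 1) := key i (i + 1) hi1 (by omega) (by omega)
    have h0 : 0 < t - x m := by linarith
    rw [abs_of_pos h0, abs_lt]
    constructor <;> linarith
  · -- i + k < m
    have hxm : x (i + k + 1) ≤ x m := hle _ _ (by omega) (by omega) hmn
    have h0 : t - x m < 0 := by linarith
    rw [abs_of_neg h0, abs_lt]
    constructor <;> linarith
end
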